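/- De Jongh–Sambin fixed-point theorem for propositional K + □^{n+1}⊥, with an explicit algorithm: if a propositional modal formula A(p) is modalized in p, then the formula A_n, defined recursively by A_0 := A^{⊤(0)} and A_{k+1} := A^{⊤(k+1)}(p)[⊤, A_k, …, A_0], satisfies K + □^{n+1}⊥ ⊢ A_n ↔ A(A_n), and A_n contains only propositional variables of A(p) other than p. -/

import Mathlib

namespace PropML

/-- Propositional modal formulas. -/
inductive PF : Type
  | verum : PF
  | falsum : PF
  | pvar (q : ℕ) : PF
  | neg (A : PF) : PF
  | imp (A B : PF) : PF
  | box (A : PF) : PF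

namespace PF

def land (A B : PF) : PF := (A.imp B.neg).neg

def iff (A B : PF) : PF := (A.imp B).land (B.imp A)

def boxIter : ℕ → PF → PF
  | 0, A => A
  | n + 1, A => (boxIter n A).box

def pvars : PF → Finset ℕ
  | pvar q => {q}
  | neg A => A.pvars
  | imp A B => A.pvars ∪ B.pvars
  | box A => A.pvars
  | _ => ∅

/-- Substitution of a formula for a propositional variable. -/
def psub : PF → ℕ → PF → PF
  | pvar q, p, B => if q = p then B else pvar q
  | neg A, p, B => (A.psub p B).neg
  | imp A C, p, B => (A.psub p B).imp (C.psub p B)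
  | box A, p, B => (A.psub p B).box
  | A, _, _ => A

/-- Depth-indexed substitution of `σ i` for occurrences of `p` at modal depth `i`. -/
def dsub : PF → ℕ → (ℕ → PF) → PF
  | pvar q, p, σ => if q = p then σ 0 else pvar q
  | neg A, p, σ => (A.dsub p σ).neg
  | imp A C, p, σ => (A.dsub p σ).imp (C.dsub p σ)
  | box A, p, σ => (A.dsub p (fun i => σ (i + 1))).box
  | A, _, _ => A

/-- `A^{⊤(n)}`: replace boxed subformulas at modal depth `n` by ⊤. -/
def eraseT : ℕ → PF → PF
  | 0, box _ => verum
  | n + 1, box A => (eraseT n A).box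
  | n, neg A => (eraseT n A).neg
  | n, imp A B => (eraseT n A).imp (eraseT n B)
  | _, A => A

def occursAt (p : ℕ) : PF → ℕ → Prop
  | pvar q, d => q = p ∧ d = 0
  | neg A, d => occursAt p A d
  | imp A B, d => occursAt p A d ∨ occursAt p B d
  | box A, d => ∃ d', d = d' + 1 ∧ occursAt p A d'
  | _, _ => False

def Modalized (p : ℕ) (A : PF) : Prop := ¬ occursAt p A 0

/-- `A_0 := A^{⊤(0)}(p)[⊤]`, `A_{k+1} := A^{⊤(k+1)}(p)[⊤, A_k, …, A_0]`. -/
def fpSeq (p : ℕ) (A : PF) : ℕ → PF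
  | 0 => (eraseT 0 A).dsub p (fun _ => verum)
  | n + 1 => (eraseT (n + 1) A).dsub p
      (fun i => match i with
        | 0 => verum
        | j + 1 => fpSeq p A (n - j))
  termination_by k => k
  decreasing_by omega

end PF

open PF

/-- Axioms of classical propositional logic and the distribution axiom K. -/
inductive KAx : PF → Prop
  | imp1 (A B : PF) : KAx (A.imp (B.imp A))
  | imp2 (A B C : PF) : KAx ((A.imp (B.imp C)).imp ((A.imp B).imp (A.imp C)))
  | contra (A B : PF) : KAx ((A.neg.imp B.neg).imp (B.imp A))
  | verum : KAx PF.verum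
  | exfalso (A : PF) : KAx (PF.falsum.imp A)
  | negE (A : PF) : KAx (A.neg.imp (A.imp PF.falsum))
  | negI (A : PF) : KAx ((A.imp PF.falsum).imp A.neg)
  | k (A B : PF) : KAx (((A.imp B).box).imp (A.box.imp B.box))

/-- Provability in a normal modal logic extending K by the axioms `Ext`. -/
inductive KPrf (Ext : PF → Prop) : PF → Prop
  | ax {A : PF} : KAx A → KPrf Ext A
  | ext {A : PF} : Ext A → KPrf Ext A
  | mp {A B : PF} : KPrf Ext (A.imp B) → KPrf Ext A → KPrf Ext B
  | nec {A : PF} : KPrf Ext A → KPrf Ext A.box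

/-- Provability in K + □^{n+1}⊥. -/
def Kn (n : ℕ) : PF → Prop := KPrf (fun B => B = boxIter (n + 1) PF.falsum)

end PropML

/-!
In K + □^{n+1}⊥ every formula under `n + 1` boxes is provable. Hence a boxed subformula of `A`
at depth `k` may be replaced by ⊤ without changing `A` up to equivalence under `n - k` boxes,
and a substitution for `p` at depth `i` only matters up to equivalence under `i` boxes. By
strong induction on `k`, the approximants `A_k` and `A_m` (`k ≤ m`) are therefore equivalent
under `n - k` boxes: both are `A^{⊤(k)}` with `p` at depth `i ≥ 1` replaced by `A_{k-i}`
resp. `A_{m-i}`, which agree under `n - k + i` boxes by induction, and `p` never occurs at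
depth `0` since `A` is modalized. With `k = n - i` and `m = n` this gives `□^i (A_{n-i} ↔ A_n)`,
which is what is needed to replace each `A_{n-i}` in `A_n = A^{⊤(n)}[⊤, A_{n-1}, …, A_0]`
by `A_n` itself; restoring the erased boxes, harmless at depth `n`, then yields `A(A_n)`.
-/

namespace PropML
open PF

inductive Der (Ext : PF → Prop) : List PF → PF → Prop
  | thm {Γ A} : KPrf Ext A → Der Ext Γ A
  | hyp {Γ A} : A ∈ Γ → Der Ext Γ A
  | mp {Γ A B} : Der Ext Γ (A.imp B) → Der Ext Γ A → Der Ext Γ B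

namespace Der
variable {Ext : PF → Prop} {Γ : List PF} {A B C D : PF}

theorem ax (h : KAx A) : Der Ext Γ A := thm (.ax h)

theorem mp_thm (h : KPrf Ext (A.imp B)) (h' : Der Ext Γ A) : Der Ext Γ B := mp (thm h) h'

theorem hyp₀ : Der Ext (A :: Γ) A := hyp (by simp)
theorem hyp₁ : Der Ext (A :: B :: Γ) B := hyp (by simp)
theorem hyp₂ : Der Ext (A :: B :: C :: Γ) C := hyp (by simp)
theorem hyp₃ : Der Ext (A :: B :: C :: D :: Γ) D := hyp (by simp)

theorem imp_self : Der Ext Γ (A.imp A) :=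
  mp (mp (ax (.imp2 A (A.imp A) A)) (ax (.imp1 A (A.imp A)))) (ax (.imp1 A A))

theorem imp_intro (h : Der Ext (A :: Γ) B) : Der Ext Γ (A.imp B) := by
  generalize hΔ : A :: Γ = Δ at h
  induction h with
  | thm h => exact mp (ax (.imp1 _ _)) (thm h)
  | hyp h =>
    subst hΔ
    rcases List.mem_cons.1 h with rfl | h
    · exact imp_self
    · exact mp (ax (.imp1 _ _)) (hyp h)
  | mp _ _ ih₁ ih₂ => exact mp (mp (ax (.imp2 _ _ _)) ih₁) ih₂

end Der

section Propositional
variable {Ext : PF → Prop}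

theorem KPrf.of_der_nil {A : PF} (h : Der Ext [] A) : KPrf Ext A := by
  generalize hΓ : ([] : List PF) = Γ at h
  induction h with
  | thm h => exact h
  | hyp h => subst hΓ; simp at h
  | mp _ _ ih₁ ih₂ => exact .mp ih₁ ih₂

theorem KPrf.imp_neg_neg (A : PF) : KPrf Ext (A.imp A.neg.neg) :=
  of_der_nil <| .imp_intro <| .mp (.ax (.negI _)) <| .imp_intro <|
    .mp (.mp (.ax (.negE A)) .hyp₀) .hyp₁

theorem KPrf.neg_neg_imp (A : PF) : KPrf Ext (A.neg.neg.imp A) :=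
  .mp (.ax (.contra A A.neg.neg)) (imp_neg_neg A.neg)

theorem Der.by_contra {Γ : List PF} {A : PF} (h : Der Ext (A.neg :: Γ) falsum) : Der Ext Γ A :=
  .mp_thm (.neg_neg_imp A) (.mp (.ax (.negI _)) h.imp_intro)

theorem KPrf.and_left (A B : PF) : KPrf Ext ((A.land B).imp A) :=
  of_der_nil <| .imp_intro <| .by_contra <| .mp (.mp (.ax (.negE (A.imp B.neg))) .hyp₁) <|
    .imp_intro <| .mp (.ax (.exfalso B.neg)) (.mp (.mp (.ax (.negE A)) .hyp₁) .hyp₀)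

theorem KPrf.and_right (A B : PF) : KPrf Ext ((A.land B).imp B) :=
  of_der_nil <| .imp_intro <| .by_contra <| .mp (.mp (.ax (.negE (A.imp B.neg))) .hyp₁) <|
    .mp (.ax (.imp1 B.neg A)) .hyp₀

theorem KPrf.and_intro (A B : PF) : KPrf Ext (A.imp (B.imp (A.land B))) :=
  of_der_nil <| .imp_intro <| .imp_intro <| .mp (.ax (.negI _)) <| .imp_intro <|
    .mp (.mp (.ax (.negE B)) (.mp .hyp₀ .hyp₂)) .hyp₁

theorem KPrf.iff_intro (A B : PF) : KPrf Ext ((A.imp B).imp ((B.imp A).imp (A.iff B))) :=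
  and_intro _ _

theorem KPrf.iff_mp (A B : PF) : KPrf Ext ((A.iff B).imp (A.imp B)) := and_left _ _

theorem KPrf.iff_mpr (A B : PF) : KPrf Ext ((A.iff B).imp (B.imp A)) := and_right _ _

theorem KPrf.iff_refl (A : PF) : KPrf Ext (A.iff A) :=
  of_der_nil <| .mp (.mp_thm (iff_intro A A) .imp_self) .imp_self

theorem KPrf.iff_trans (A B C : PF) : KPrf Ext ((A.iff B).imp ((B.iff C).imp (A.iff C))) :=
  of_der_nil <| .imp_intro <| .imp_intro <|
    .mp
      (.mp_thm (iff_intro A C) <| .imp_intro <|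
        .mp (.mp_thm (iff_mp B C) .hyp₁) (.mp (.mp_thm (iff_mp A B) .hyp₂) .hyp₀))
      (.imp_intro <|
        .mp (.mp_thm (iff_mpr A B) .hyp₂) (.mp (.mp_thm (iff_mpr B C) .hyp₁) .hyp₀))

theorem KPrf.contrapose (A B : PF) : KPrf Ext ((A.imp B).imp (B.neg.imp A.neg)) :=
  of_der_nil <| .imp_intro <| .imp_intro <| .mp (.ax (.negI A)) <| .imp_intro <|
    .mp (.mp (.ax (.negE B)) .hyp₁) (.mp .hyp₂ .hyp₀)

theorem KPrf.neg_congr (A B : PF) : KPrf Ext ((A.iff B).imp (A.neg.iff B.neg)) :=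
  of_der_nil <| .imp_intro <|
    .mp
      (.mp_thm (iff_intro A.neg B.neg) (.mp_thm (contrapose B A) (.mp_thm (iff_mpr A B) .hyp₀)))
      (.mp_thm (contrapose A B) (.mp_thm (iff_mp A B) .hyp₀))

theorem KPrf.imp_congr (A B C D : PF) :
    KPrf Ext ((A.iff B).imp ((C.iff D).imp ((A.imp C).iff (B.imp D)))) :=
  of_der_nil <| .imp_intro <| .imp_intro <|
    .mp
      (.mp_thm (iff_intro _ _) <| .imp_intro <| .imp_intro <|
        .mp (.mp_thm (iff_mp C D) .hyp₂) (.mp .hyp₁ (.mp (.mp_thm (iff_mpr A B) .hyp₃) .hyp₀)))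
      (.imp_intro <| .imp_intro <|
        .mp (.mp_thm (iff_mpr C D) .hyp₂) (.mp .hyp₁ (.mp (.mp_thm (iff_mp A B) .hyp₃) .hyp₀)))

theorem KPrf.verum_iff (B : PF) : KPrf Ext (B.imp (verum.iff B)) :=
  of_der_nil <| .imp_intro <|
    .mp (.mp_thm (iff_intro verum B) (.mp (.ax (.imp1 B verum)) .hyp₀))
      (.mp (.ax (.imp1 verum B)) (.ax .verum))

theorem KPrf.box_congr (A B : PF) : KPrf Ext ((A.iff B).box.imp (A.box.iff B.box)) :=
  of_der_nil <| .imp_intro <|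
    .mp
      (.mp_thm (iff_intro _ _) <| .mp_thm (.ax (.k A B)) <|
        .mp_thm (.mp (.ax (.k _ _)) (.nec (iff_mp A B))) .hyp₀)
      (.mp_thm (.ax (.k B A)) <| .mp_thm (.mp (.ax (.k _ _)) (.nec (iff_mpr A B))) .hyp₀)

end Propositional

theorem boxIter_box (j : ℕ) (A : PF) : boxIter j A.box = boxIter (j + 1) A := by
  induction j with
  | zero => rfl
  | succ j ih => simp [boxIter, ih]

theorem boxIter_add (i j : ℕ) (A : PF) : boxIter (i + j) A = boxIter i (boxIter j A) := by
  induction i with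
  | zero => simp [boxIter]
  | succ i ih => rw [Nat.add_right_comm, boxIter, ih, boxIter]

section Boxed
variable {Ext : PF → Prop} {j : ℕ} {A B C D : PF}

theorem KPrf.boxIter_nec (j : ℕ) (h : KPrf Ext A) : KPrf Ext (boxIter j A) := by
  induction j with
  | zero => exact h
  | succ j ih => exact ih.nec

theorem KPrf.boxIter_mp (h : KPrf Ext (boxIter j (A.imp B))) (h' : KPrf Ext (boxIter j A)) :
    KPrf Ext (boxIter j B) := by
  induction j generalizing A B with
  | zero => exact h.mp h'
  | succ j ih =>
    rw [← boxIter_box] at h h' ⊢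
    exact ih (ih (boxIter_nec j (.ax (.k A B))) h) h'

theorem KPrf.boxIter_iff_refl : KPrf Ext (boxIter j (A.iff A)) :=
  boxIter_nec j (iff_refl A)

theorem KPrf.boxIter_iff_trans (h : KPrf Ext (boxIter j (A.iff B)))
    (h' : KPrf Ext (boxIter j (B.iff C))) : KPrf Ext (boxIter j (A.iff C)) :=
  boxIter_mp (boxIter_mp (boxIter_nec j (iff_trans A B C)) h) h'

theorem KPrf.boxIter_neg_congr (h : KPrf Ext (boxIter j (A.iff B))) :
    KPrf Ext (boxIter j (A.neg.iff B.neg)) :=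
  boxIter_mp (boxIter_nec j (neg_congr A B)) h

theorem KPrf.boxIter_imp_congr (h : KPrf Ext (boxIter j (A.iff B)))
    (h' : KPrf Ext (boxIter j (C.iff D))) : KPrf Ext (boxIter j ((A.imp C).iff (B.imp D))) :=
  boxIter_mp (boxIter_mp (boxIter_nec j (imp_congr A B C D)) h) h'

theorem KPrf.boxIter_verum_iff (h : KPrf Ext (boxIter j B)) :
    KPrf Ext (boxIter j (verum.iff B)) :=
  boxIter_mp (boxIter_nec j (verum_iff B)) h

theorem KPrf.boxIter_box_congr (h : KPrf Ext (boxIter (j + 1) (A.iff B))) :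
    KPrf Ext (boxIter j (A.box.iff B.box)) :=
  boxIter_mp (boxIter_nec j (box_congr A B)) (by rwa [boxIter_box])

theorem KPrf.boxIter_of_le {n t : ℕ} (hbot : KPrf Ext (boxIter (n + 1) falsum))
    (ht : n + 1 ≤ t) : KPrf Ext (boxIter t A) := by
  obtain ⟨d, rfl⟩ := Nat.exists_eq_add_of_le' ht
  have hbot' : KPrf Ext (boxIter (d + (n + 1)) falsum) := by
    rw [boxIter_add]
    exact boxIter_nec d hbot
  exact boxIter_mp (boxIter_nec _ (.ax (.exfalso A))) hbot'

end Boxed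

namespace PF

section EraseT
variable {m : ℕ} {A B : PF}

@[simp] theorem eraseT_verum : eraseT m verum = verum := by cases m <;> rfl
@[simp] theorem eraseT_falsum : eraseT m falsum = falsum := by cases m <;> rfl
@[simp] theorem eraseT_pvar (q : ℕ) : eraseT m (pvar q) = pvar q := by cases m <;> rfl
@[simp] theorem eraseT_neg : eraseT m A.neg = (eraseT m A).neg := by cases m <;> rfl
@[simp] theorem eraseT_imp : eraseT m (A.imp B) = (eraseT m A).imp (eraseT m B) := by
  cases m <;> rfl
@[simp] theorem eraseT_zero_box : eraseT 0 A.box = verum := rfl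
@[simp] theorem eraseT_succ_box : eraseT (m + 1) A.box = (eraseT m A).box := rfl

end EraseT

theorem psub_eq_dsub (p : ℕ) (B A : PF) : A.psub p B = A.dsub p (fun _ => B) := by
  induction A with
  | neg A ih => simp [psub, dsub, ih]
  | imp A C ih₁ ih₂ => simp [psub, dsub, ih₁, ih₂]
  | box A ih => simp [psub, dsub, ih]
  | _ => rfl

theorem dsub_congr {p : ℕ} {B : PF} {σ τ : ℕ → PF} (h : ∀ i, occursAt p B i → σ i = τ i) :
    B.dsub p σ = B.dsub p τ := by
  induction B generalizing σ τ with
  | pvar q =>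
    by_cases hq : q = p
    · simp only [dsub, if_pos hq]
      exact h 0 ⟨hq, rfl⟩
    · simp [dsub, hq]
  | neg A ih => exact congrArg neg (ih h)
  | imp A C ih₁ ih₂ =>
    exact congrArg₂ imp (ih₁ fun i hi => h i (.inl hi)) (ih₂ fun i hi => h i (.inr hi))
  | box A ih => exact congrArg box (ih fun i hi => h (i + 1) ⟨i, rfl, hi⟩)
  | _ => rfl

theorem eraseT_eraseT (B : PF) {k m : ℕ} (h : k ≤ m) : eraseT k (eraseT m B) = eraseT k B := by
  induction B generalizing k m with
  | neg A ih => simp [ih h]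
  | imp A C ih₁ ih₂ => simp [ih₁ h, ih₂ h]
  | box A ih =>
    match m, k with
    | 0, 0 => rfl
    | _ + 1, 0 => rfl
    | m + 1, k + 1 => simp [ih (Nat.le_of_succ_le_succ h)]
  | _ => simp

theorem occursAt_and_le_of_occursAt_eraseT {q : ℕ} {B : PF} {k d : ℕ}
    (h : occursAt q (eraseT k B) d) : occursAt q B d ∧ d ≤ k := by
  induction B generalizing k d with
  | verum | falsum => simp [occursAt] at h
  | pvar r =>
    rw [eraseT_pvar] at h
    obtain ⟨hr, rfl⟩ := h
    exact ⟨⟨hr, rfl⟩, k.zero_le⟩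
  | neg A ih =>
    rw [eraseT_neg] at h
    exact ih h
  | imp A C ih₁ ih₂ =>
    rw [eraseT_imp] at h
    rcases h with h | h
    · exact ⟨.inl (ih₁ h).1, (ih₁ h).2⟩
    · exact ⟨.inr (ih₂ h).1, (ih₂ h).2⟩
  | box A ih =>
    match k, h with
    | 0, h => exact h.elim
    | k + 1, ⟨d', hd, h'⟩ =>
      subst hd
      exact ⟨⟨d', rfl, (ih h').1⟩, Nat.succ_le_succ (ih h').2⟩

theorem Modalized.ne_zero_of_occursAt {p : ℕ} {A : PF} {i : ℕ} (hmod : Modalized p A)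
    (h : occursAt p A i) : i ≠ 0 := by
  rintro rfl
  exact hmod h

theorem pvars_eraseT_subset (k : ℕ) (B : PF) : (eraseT k B).pvars ⊆ B.pvars := by
  induction B generalizing k with
  | neg A ih => simpa [pvars] using ih k
  | imp A C ih₁ ih₂ => simpa [pvars] using Finset.union_subset_union (ih₁ k) (ih₂ k)
  | box A ih =>
    cases k with
    | zero => simp [pvars]
    | succ k => exact ih k
  | _ => simp

theorem pvars_dsub_subset {p : ℕ} {B : PF} {σ : ℕ → PF} {S : Finset ℕ}
    (hσ : ∀ i, occursAt p B i → (σ i).pvars ⊆ S) (hB : B.pvars.erase p ⊆ S) :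
    (B.dsub p σ).pvars ⊆ S := by
  induction B generalizing σ with
  | pvar q =>
    by_cases hq : q = p
    · simpa [dsub, hq] using hσ 0 ⟨hq, rfl⟩
    · simp only [dsub, if_neg hq, pvars, Finset.singleton_subset_iff]
      exact hB (by simp [pvars, hq])
  | neg A ih => exact ih hσ hB
  | imp A C ih₁ ih₂ =>
    simp only [pvars, Finset.erase_union_distrib, Finset.union_subset_iff] at hB
    exact Finset.union_subset (ih₁ (fun i hi => hσ i (.inl hi)) hB.1)
      (ih₂ (fun i hi => hσ i (.inr hi)) hB.2)
  | box A ih => exact ih (fun i hi => hσ (i + 1) ⟨i, rfl, hi⟩) hB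
  | _ => simp [dsub, pvars]

end PF

/-- The substitution `[⊤, A_{k-1}, …, A_0]` of the definition of `A_k`. -/
def fpSubst (p : ℕ) (A : PF) (k : ℕ) (i : ℕ) : PF :=
  if i = 0 then verum else fpSeq p A (k - i)

theorem fpSeq_eq_dsub (p : ℕ) (A : PF) (k : ℕ) :
    fpSeq p A k = (eraseT k A).dsub p (fpSubst p A k) := by
  cases k with
  | zero =>
    rw [fpSeq]
    refine dsub_congr fun i hi => ?_
    obtain rfl : i = 0 := Nat.le_zero.1 (occursAt_and_le_of_occursAt_eraseT hi).2
    rfl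
  | succ m =>
    rw [fpSeq]
    refine dsub_congr fun i _ => ?_
    cases i <;> simp [fpSubst]

section FixedPoint
variable {Ext : PF → Prop} {n : ℕ}

theorem eraseT_dsub_iff (hbot : KPrf Ext (boxIter (n + 1) falsum)) (p : ℕ) (B : PF)
    {j m : ℕ} (σ : ℕ → PF) (h : n ≤ j + m) :
    KPrf Ext (boxIter j (((eraseT m B).dsub p σ).iff (B.dsub p σ))) := by
  induction B generalizing j m σ with
  | neg A ih =>
    rw [eraseT_neg]
    exact .boxIter_neg_congr (ih σ h)
  | imp A C ih₁ ih₂ =>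
    rw [eraseT_imp]
    exact .boxIter_imp_congr (ih₁ σ h) (ih₂ σ h)
  | box A ih =>
    cases m with
    | zero =>
      refine .boxIter_verum_iff ?_
      show KPrf Ext (boxIter j (A.dsub p _).box)
      rw [boxIter_box]
      exact .boxIter_of_le hbot (by omega)
    | succ m => exact .boxIter_box_congr (ih _ (by omega))
  | _ => simpa using .boxIter_iff_refl

theorem dsub_iff_dsub (p : ℕ) (B : PF) {j : ℕ} {σ τ : ℕ → PF}
    (h : ∀ i, occursAt p B i → KPrf Ext (boxIter (j + i) ((σ i).iff (τ i)))) :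
    KPrf Ext (boxIter j ((B.dsub p σ).iff (B.dsub p τ))) := by
  induction B generalizing j σ τ with
  | pvar q =>
    by_cases hq : q = p
    · simpa [dsub, hq] using h 0 ⟨hq, rfl⟩
    · simpa [dsub, hq] using .boxIter_iff_refl
  | neg A ih => exact .boxIter_neg_congr (ih h)
  | imp A C ih₁ ih₂ =>
    exact .boxIter_imp_congr (ih₁ fun i hi => h i (.inl hi)) (ih₂ fun i hi => h i (.inr hi))
  | box A ih =>
    refine .boxIter_box_congr (ih fun i hi => ?_)
    rw [Nat.add_right_comm]
    exact h (i + 1) ⟨i, rfl, hi⟩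
  | _ => exact .boxIter_iff_refl

theorem fpSeq_iff_fpSeq (hbot : KPrf Ext (boxIter (n + 1) falsum)) {p : ℕ} {A : PF}
    (hmod : Modalized p A) {j k m : ℕ} (hkm : k ≤ m) (hn : n ≤ j + k) :
    KPrf Ext (boxIter j ((fpSeq p A k).iff (fpSeq p A m))) := by
  induction k using Nat.strong_induction_on generalizing j m with
  | _ k ih =>
    rw [fpSeq_eq_dsub p A k, fpSeq_eq_dsub p A m]
    have hsubst : KPrf Ext (boxIter j
        (((eraseT k A).dsub p (fpSubst p A k)).iff ((eraseT k A).dsub p (fpSubst p A m)))) := by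
      refine dsub_iff_dsub p _ fun i hi => ?_
      obtain ⟨hiA, hik⟩ := occursAt_and_le_of_occursAt_eraseT hi
      obtain ⟨i, rfl⟩ := Nat.exists_eq_succ_of_ne_zero (hmod.ne_zero_of_occursAt hiA)
      simpa [fpSubst] using ih (k - (i + 1)) (by omega) (j := j + (i + 1)) (by omega) (by omega)
    have herase : KPrf Ext (boxIter j
        (((eraseT k A).dsub p (fpSubst p A m)).iff ((eraseT m A).dsub p (fpSubst p A m)))) := by
      simpa [eraseT_eraseT A hkm] using eraseT_dsub_iff hbot p (eraseT m A) _ hn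
    exact .boxIter_iff_trans hsubst herase

theorem fpSeq_iff_psub (hbot : KPrf Ext (boxIter (n + 1) falsum)) {p : ℕ} {A : PF}
    (hmod : Modalized p A) : KPrf Ext ((fpSeq p A n).iff (A.psub p (fpSeq p A n))) := by
  have hsubst : KPrf Ext (boxIter 0
      (((eraseT n A).dsub p (fpSubst p A n)).iff ((eraseT n A).dsub p fun _ => fpSeq p A n))) := by
    refine dsub_iff_dsub p _ fun i hi => ?_
    obtain ⟨hiA, hin⟩ := occursAt_and_le_of_occursAt_eraseT hi
    obtain ⟨i, rfl⟩ := Nat.exists_eq_succ_of_ne_zero (hmod.ne_zero_of_occursAt hiA)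
    simpa [fpSubst] using
      fpSeq_iff_fpSeq hbot hmod (j := 0 + (i + 1)) (Nat.sub_le n (i + 1)) (by omega)
  have herase := eraseT_dsub_iff hbot p A (fun _ => fpSeq p A n) (j := 0) (m := n) (Nat.zero_add n).ge
  have h := KPrf.boxIter_iff_trans hsubst herase
  rwa [← fpSeq_eq_dsub, ← psub_eq_dsub] at h

end FixedPoint

theorem Kn.boxIter_falsum (n : ℕ) : Kn n (boxIter (n + 1) falsum) := KPrf.ext rfl

theorem pvars_fpSeq_subset (p : ℕ) (A : PF) (k : ℕ) : (fpSeq p A k).pvars ⊆ A.pvars.erase p := by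
  induction k using Nat.strong_induction_on with
  | _ k ih =>
    rw [fpSeq_eq_dsub]
    refine pvars_dsub_subset (fun i hi => ?_)
      (Finset.erase_subset_erase p (pvars_eraseT_subset k A))
    have hik := (occursAt_and_le_of_occursAt_eraseT hi).2
    unfold fpSubst
    split_ifs with hi0
    · simp [pvars]
    · exact ih _ (by omega)

end PropML

open PropML PropML.PF in
/-- de Jongh–Sambin fixed-point theorem for K + □^{n+1}⊥ with the explicit
algorithm: A_n is a fixed point of A(p), and contains only propositional variables of A
other than p. -/
theorem stmt4 (n p : ℕ) (A : PF) (hmod : Modalized p A) :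
    Kn n ((fpSeq p A n).iff (A.psub p (fpSeq p A n))) ∧
    (fpSeq p A n).pvars ⊆ A.pvars.erase p :=
  ⟨fpSeq_iff_psub (Kn.boxIter_falsum n) hmod, pvars_fpSeq_subset p A n⟩
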